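/- In the KL decomposition with unnormalized densities, the divergence between a normalized target Z⁻¹π and a normalized approximation Z̃⁻¹π̃ satisfies D_KL(Z⁻¹π || Z̃⁻¹π̃) ≤ log(Z̃/Z) + (Z̃/Z)·‖π/π̃‖_{L²(ν̃)}·‖π/π̃ − 1‖_{L²(ν̃)}, where ν̃ = Z̃⁻¹π̃ dx, using the inequality log x ≤ x − 1. -/

import Mathlib

open MeasureTheory

/-- KL decomposition with unnormalized densities: the divergence between the
normalized target `Z⁻¹π` and the normalized approximation `Z̃⁻¹π̃` satisfies
`D_KL ≤ log(Z̃/Z) + (Z̃/Z) ‖π/π̃‖_{L²(ν̃)} ‖π/π̃ − 1‖_{L²(ν̃)}` where `ν̃ = Z̃⁻¹ π̃ dx`. -/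
theorem kl_unnormalized_decomposition_bound (d : ℕ)
    (π πt : (Fin d → ℝ) → ℝ)
    (hπ_nonneg : ∀ x, 0 ≤ π x) (hπt_nonneg : ∀ x, 0 ≤ πt x)
    (hπ_int : Integrable π) (hπt_int : Integrable πt)
    (Z Zt : ℝ) (hZ : Z = ∫ x, π x) (hZt : Zt = ∫ x, πt x)
    (hZ_pos : 0 < Z) (hZt_pos : 0 < Zt)
    -- `π/π̃` is well defined `ν̃`-a.e. (the target is absolutely continuous w.r.t. `ν̃`)
    (habs : ∀ᵐ x, πt x = 0 → π x = 0)
    -- `π/π̃ ∈ L²(ν̃)` and the KL integrand is integrable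
    (hL2 : Integrable fun x => (π x / πt x) ^ 2 * (Zt⁻¹ * πt x))
    (hL2' : Integrable fun x => (π x / πt x - 1) ^ 2 * (Zt⁻¹ * πt x))
    (hKL_int : Integrable fun x =>
      Real.log ((Z⁻¹ * π x) / (Zt⁻¹ * πt x)) * (Z⁻¹ * π x)) :
    (∫ x, Real.log ((Z⁻¹ * π x) / (Zt⁻¹ * πt x)) * (Z⁻¹ * π x)) ≤
      Real.log (Zt / Z) +
        (Zt / Z) * Real.sqrt (∫ x, (π x / πt x) ^ 2 * (Zt⁻¹ * πt x)) *
          Real.sqrt (∫ x, (π x / πt x - 1) ^ 2 * (Zt⁻¹ * πt x)) := by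
  set f : (Fin d → ℝ) → ℝ := fun x => π x / πt x with hf_def
  set w : (Fin d → ℝ) → ℝ := fun x => Zt⁻¹ * πt x with hw_def
  have hw_nonneg : ∀ x, 0 ≤ w x := fun x =>
    mul_nonneg (inv_nonneg.2 hZt_pos.le) (hπt_nonneg x)
  set F : (Fin d → ℝ) → ℝ := fun x => f x * Real.sqrt (w x) with hF_def
  set G : (Fin d → ℝ) → ℝ := fun x => (f x - 1) * Real.sqrt (w x) with hG_def
  have hF_sq : ∀ x, F x ^ 2 = f x ^ 2 * w x := by
    intro x
    simp only [hF_def, mul_pow, Real.sq_sqrt (hw_nonneg x)]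
  have hG_sq : ∀ x, G x ^ 2 = (f x - 1) ^ 2 * w x := by
    intro x
    simp only [hG_def, mul_pow, Real.sq_sqrt (hw_nonneg x)]
  -- measurability
  have hπm : AEStronglyMeasurable π volume := hπ_int.aestronglyMeasurable
  have hπtm : AEStronglyMeasurable πt volume := hπt_int.aestronglyMeasurable
  have hfm : AEStronglyMeasurable f volume :=
    (hπ_int.aemeasurable.div hπt_int.aemeasurable).aestronglyMeasurable
  have hswm : AEStronglyMeasurable (fun x => Real.sqrt (w x)) volume :=
    (Real.continuous_sqrt.comp_aestronglyMeasurable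
      (aestronglyMeasurable_const.mul hπtm))
  have hFm : AEStronglyMeasurable F volume := hfm.mul hswm
  have hGm : AEStronglyMeasurable G volume := (hfm.sub aestronglyMeasurable_const).mul hswm
  -- integrability of F^2, G^2
  have hF2_int : Integrable (fun x => F x ^ 2) := by
    simpa only [hF_sq] using hL2
  have hG2_int : Integrable (fun x => G x ^ 2) := by
    simpa only [hG_sq] using hL2'
  have hF_mem : MemLp F 2 volume := (memLp_two_iff_integrable_sq hFm).2 hF2_int
  have hG_mem : MemLp G 2 volume := (memLp_two_iff_integrable_sq hGm).2 hG2_int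
  -- integrability of F*G
  have hFG_int : Integrable (fun x => F x * G x) := by
    refine Integrable.mono' ((hF2_int.add hG2_int).div_const 2) (hFm.mul hGm) ?_
    refine Filter.Eventually.of_forall fun x => ?_
    have h : |F x * G x| ≤ (F x ^ 2 + G x ^ 2) / 2 := by
      rw [abs_mul]
      nlinarith [sq_nonneg (|F x| - |G x|), sq_abs (F x), sq_abs (G x),
        abs_nonneg (F x), abs_nonneg (G x)]
    rw [Real.norm_eq_abs]
    exact h
  -- F x * G x = f x * (f x - 1) * w x
  have hFG_eq : ∀ x, F x * G x = f x * (f x - 1) * w x := by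
    intro x
    have hss : Real.sqrt (w x) * Real.sqrt (w x) = w x := Real.mul_self_sqrt (hw_nonneg x)
    simp only [hF_def, hG_def]
    calc f x * Real.sqrt (w x) * ((f x - 1) * Real.sqrt (w x))
        = f x * (f x - 1) * (Real.sqrt (w x) * Real.sqrt (w x)) := by ring
      _ = f x * (f x - 1) * w x := by rw [hss]
  -- Cauchy–Schwarz
  have hCS : (∫ x, F x * G x) ≤
      Real.sqrt (∫ x, f x ^ 2 * w x) * Real.sqrt (∫ x, (f x - 1) ^ 2 * w x) := by
    have hnorm_int : Integrable (fun x => ‖F x‖ * ‖G x‖) := by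
      simpa only [Real.norm_eq_abs, ← abs_mul] using hFG_int.abs
    have h1 : (∫ x, F x * G x) ≤ ∫ x, ‖F x‖ * ‖G x‖ := by
      refine integral_mono hFG_int hnorm_int fun x => ?_
      simpa only [Real.norm_eq_abs, ← abs_mul] using le_abs_self (F x * G x)
    have hpq : (2 : ℝ).HolderConjugate 2 := Real.HolderConjugate.two_two
    have hF_mem' : MemLp F (ENNReal.ofReal 2) volume := by
      convert hF_mem using 2; norm_num
    have hG_mem' : MemLp G (ENNReal.ofReal 2) volume := by
      convert hG_mem using 2; norm_num
    have h2 := integral_mul_norm_le_Lp_mul_Lq hpq hF_mem' hG_mem'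
    have hFpow : ∀ (y : ℝ), ‖y‖ ^ (2 : ℝ) = y ^ 2 := by
      intro y
      rw [Real.norm_eq_abs, show ((2 : ℝ) = ((2 : ℕ) : ℝ)) by norm_num,
        Real.rpow_natCast, sq_abs]
    have hr : ∀ (a : ℝ), a ^ (1 / 2 : ℝ) = Real.sqrt a := fun a =>
      (Real.sqrt_eq_rpow a).symm
    simp only [hFpow, hr] at h2
    calc (∫ x, F x * G x) ≤ ∫ x, ‖F x‖ * ‖G x‖ := h1
      _ ≤ Real.sqrt (∫ x, F x ^ 2) * Real.sqrt (∫ x, G x ^ 2) := h2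
      _ = _ := by simp only [hF_sq, hG_sq]
  -- pointwise decomposition of the KL integrand
  have hdecomp : ∀ᵐ x, Real.log ((Z⁻¹ * π x) / (Zt⁻¹ * πt x)) * (Z⁻¹ * π x) =
      Real.log (Zt / Z) * (Z⁻¹ * π x) + Real.log (f x) * (Z⁻¹ * π x) := by
    filter_upwards [habs] with x hx
    rcases eq_or_lt_of_le (hπ_nonneg x) with hπ0 | hπpos
    · simp [← hπ0]
    rcases eq_or_lt_of_le (hπt_nonneg x) with hπt0 | hπtpos
    · exact absurd (hx hπt0.symm) hπpos.ne'
    have h1 : (Z⁻¹ * π x) / (Zt⁻¹ * πt x) = (Zt / Z) * f x := by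
      field_simp [hf_def]
      rw [hf_def]; field_simp
    rw [h1, Real.log_mul (by positivity) (by positivity), add_mul]
  -- the log-ratio term
  have hlog_int : Integrable (fun x => Real.log (f x) * (Z⁻¹ * π x)) := by
    have : Integrable (fun x => Real.log ((Z⁻¹ * π x) / (Zt⁻¹ * πt x)) * (Z⁻¹ * π x)
        - Real.log (Zt / Z) * (Z⁻¹ * π x)) :=
      hKL_int.sub ((hπ_int.const_mul _).const_mul _)
    refine this.congr ?_
    filter_upwards [hdecomp] with x hx
    rw [hx]; ring
  -- pointwise bound for log-ratio term
  have hpt : ∀ᵐ x, Real.log (f x) * (Z⁻¹ * π x) ≤ (Zt / Z) * (F x * G x) := by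
    filter_upwards [habs] with x hx
    rw [hFG_eq x, hw_def]
    rcases eq_or_lt_of_le (hπt_nonneg x) with hπt0 | hπtpos
    · have hπ0 : π x = 0 := hx hπt0.symm
      simp [hf_def, hπ0, ← hπt0]
    rcases eq_or_lt_of_le (hπ_nonneg x) with hπ0 | hπpos
    · have hf0 : f x = 0 := by simp [hf_def, ← hπ0]
      rw [hf0, ← hπ0]
      simp
    · have hfpos : 0 < f x := div_pos hπpos hπtpos
      have hlog : Real.log (f x) ≤ f x - 1 := Real.log_le_sub_one_of_pos hfpos
      have hπeq : π x = f x * πt x := by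
        field_simp [hf_def]
        rw [hf_def]; field_simp
      calc Real.log (f x) * (Z⁻¹ * π x) ≤ (f x - 1) * (Z⁻¹ * π x) :=
            mul_le_mul_of_nonneg_right hlog (by positivity)
        _ = Zt / Z * (f x * (f x - 1) * (Zt⁻¹ * πt x)) := by
            rw [hπeq]; field_simp
  -- putting it together
  have hπ_ne : (∫ x, Z⁻¹ * π x) = 1 := by
    rw [integral_const_mul, ← hZ, inv_mul_cancel₀ hZ_pos.ne']
  have hconst_int : Integrable (fun x => Real.log (Zt / Z) * (Z⁻¹ * π x)) :=
    ((hπ_int.const_mul _).const_mul _)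
  have hsplit : (∫ x, Real.log ((Z⁻¹ * π x) / (Zt⁻¹ * πt x)) * (Z⁻¹ * π x)) =
      Real.log (Zt / Z) + ∫ x, Real.log (f x) * (Z⁻¹ * π x) := by
    rw [integral_congr_ae hdecomp, integral_add hconst_int hlog_int]
    congr 1
    rw [integral_const_mul, show (∫ x, Z⁻¹ * π x) = ∫ x, Z⁻¹ * π x from rfl]
    rw [show (fun x => Z⁻¹ * π x) = fun x => Z⁻¹ * π x from rfl] at hπ_ne
    rw [hπ_ne, mul_one]
  have hZtZ_nonneg : (0 : ℝ) ≤ Zt / Z := by positivity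
  have hbound : (∫ x, Real.log (f x) * (Z⁻¹ * π x)) ≤
      (Zt / Z) * Real.sqrt (∫ x, f x ^ 2 * w x) * Real.sqrt (∫ x, (f x - 1) ^ 2 * w x) := by
    calc (∫ x, Real.log (f x) * (Z⁻¹ * π x)) ≤ ∫ x, (Zt / Z) * (F x * G x) :=
          integral_mono_ae hlog_int (hFG_int.const_mul _) hpt
      _ = (Zt / Z) * ∫ x, F x * G x := integral_const_mul _ _
      _ ≤ (Zt / Z) * (Real.sqrt (∫ x, f x ^ 2 * w x) * Real.sqrt (∫ x, (f x - 1) ^ 2 * w x)) :=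
          mul_le_mul_of_nonneg_left hCS hZtZ_nonneg
      _ = _ := by ring
  rw [hsplit]
  exact add_le_add_right hbound _
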